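/- arXiv:0909.0469 — 6 statements merged into one kernel-verified Lean document; each statement's English description precedes it below -/
import Mathlib

section
/- The sequence a(n) defined by a(1)=a(2)=1 and a(n+2) = (c1*a(n+1) + c2)/(a(n+1)^2 * a(n)) satisfies, for all n ≥ 1, the relation a(n+2)*a(n+1)^2 + a(n+1)^2*a(n) = (2*c1 + c2 + 1)*a(n+1) - c1. -/
/-!
The recurrence is a QRT map `(x, y) ↦ (y, (c₁ y + c₂) / (y² x))`, which preserves each curve
`x² y² - k x y + c₁ (x + y) + c₂ = 0`: for fixed `y` this is a quadratic in `x` whose two roots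
have product `(c₁ y + c₂) / y²`, so the map sends one root to the other. The initial point `(1, 1)`
lies on the curve with `k = 2 c₁ + c₂ + 1`, and the claimed relation is Vieta's formula
`x + z = (k y - c₁) / y²` for the two roots `x` and `z = (c₁ y + c₂) / (y² x)`.
-/

section QRT

variable {K : Type*} [Field K]

def qrtBiquadratic (c₁ c₂ k x y : K) : K :=
  x ^ 2 * y ^ 2 - k * x * y + c₁ * (x + y) + c₂

variable {c₁ c₂ k x y : K}

theorem qrtBiquadratic_step (hx : x ≠ 0) (hy : y ≠ 0) (h : qrtBiquadratic c₁ c₂ k x y = 0) :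
    qrtBiquadratic c₁ c₂ k y ((c₁ * y + c₂) / (y ^ 2 * x)) = 0 := by
  unfold qrtBiquadratic at h ⊢
  field_simp
  linear_combination (c₁ * y + c₂) * h

theorem qrtBiquadratic_vieta_sum (hx : x ≠ 0) (hy : y ≠ 0) (h : qrtBiquadratic c₁ c₂ k x y = 0) :
    (c₁ * y + c₂) / (y ^ 2 * x) * y ^ 2 + y ^ 2 * x = k * y - c₁ := by
  unfold qrtBiquadratic at h
  field_simp
  linear_combination h

end QRT

theorem stmt_0 {K : Type*} [Field K] (c1 c2 : K) (a : ℕ → K)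
    (ha1 : a 1 = 1) (ha2 : a 2 = 1)
    (hne : ∀ n, 1 ≤ n → a n ≠ 0)
    (hrec : ∀ n, 1 ≤ n → a (n + 2) = (c1 * a (n + 1) + c2) / (a (n + 1) ^ 2 * a n)) :
    ∀ n, 1 ≤ n →
      a (n + 2) * a (n + 1) ^ 2 + a (n + 1) ^ 2 * a n
        = (2 * c1 + c2 + 1) * a (n + 1) - c1 := by
  have on_curve : ∀ n, 1 ≤ n → qrtBiquadratic c1 c2 (2 * c1 + c2 + 1) (a n) (a (n + 1)) = 0 := by
    intro n hn
    induction n, hn using Nat.le_induction with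
    | base => rw [ha1, ha2, qrtBiquadratic]; ring
    | succ n hn ih =>
      rw [hrec n hn]
      exact qrtBiquadratic_step (hne n hn) (hne (n + 1) (by omega)) ih
  intro n hn
  rw [hrec n hn]
  exact qrtBiquadratic_vieta_sum (hne n hn) (hne (n + 1) (by omega)) (on_curve n hn)
end

section
/- Let s(n) be defined by s(1)=s(2)=s(3)=s(4)=1 and s(n)*s(n-4) = c1*s(n-1)*s(n-3) + c2*s(n-2)^2 for n ≥ 5, and assume all s(n) are nonzero. Define a(n) = (s(n+2)*s(n))/s(n+1)^2. Then a(n+2)*a(n+1)^2*a(n) = c1*a(n+1) + c2 for all n ≥ 1. -/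
/-- The left side telescopes to `s₄ s₀ / s₂²`. -/
theorem somos4_ratio_recurrence {K : Type*} [Field K] {c1 c2 s₀ s₁ s₂ s₃ s₄ : K}
    (h₁ : s₁ ≠ 0) (h₂ : s₂ ≠ 0) (h₃ : s₃ ≠ 0)
    (hrec : s₄ * s₀ = c1 * s₃ * s₁ + c2 * s₂ ^ 2) :
    s₄ * s₂ / s₃ ^ 2 * (s₃ * s₁ / s₂ ^ 2) ^ 2 * (s₂ * s₀ / s₁ ^ 2) =
      c1 * (s₃ * s₁ / s₂ ^ 2) + c2 := by
  field_simp
  linear_combination hrec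

theorem stmt_1_general {K : Type*} [Field K] (c1 c2 : K) (s a : ℕ → K)
    (hsrec : ∀ n, 5 ≤ n → s n * s (n - 4) = c1 * s (n - 1) * s (n - 3) + c2 * s (n - 2) ^ 2)
    (hsne : ∀ n, 1 ≤ n → s n ≠ 0)
    (hadef : ∀ n, 1 ≤ n → a n = (s (n + 2) * s n) / s (n + 1) ^ 2) :
    ∀ n, 1 ≤ n → a (n + 2) * a (n + 1) ^ 2 * a n = c1 * a (n + 1) + c2 := by
  intro n hn
  have hrec : s (n + 4) * s n = c1 * s (n + 3) * s (n + 1) + c2 * s (n + 2) ^ 2 := by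
    simpa using hsrec (n + 4) (by omega)
  rw [hadef n hn, hadef (n + 1) (by omega), hadef (n + 2) (by omega)]
  exact somos4_ratio_recurrence (hsne (n + 1) (by omega)) (hsne (n + 2) (by omega))
    (hsne (n + 3) (by omega)) hrec

theorem stmt_1 {K : Type*} [Field K] (c1 c2 : K) (s a : ℕ → K)
    (hs1 : s 1 = 1) (hs2 : s 2 = 1) (hs3 : s 3 = 1) (hs4 : s 4 = 1)
    (hsrec : ∀ n, 5 ≤ n → s n * s (n - 4) = c1 * s (n - 1) * s (n - 3) + c2 * s (n - 2) ^ 2)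
    (hsne : ∀ n, 1 ≤ n → s n ≠ 0)
    (hadef : ∀ n, 1 ≤ n → a n = (s (n + 2) * s n) / s (n + 1) ^ 2) :
    ∀ n, 1 ≤ n → a (n + 2) * a (n + 1) ^ 2 * a n = c1 * a (n + 1) + c2 :=
  stmt_1_general c1 c2 s a hsrec hsne hadef
end

section
/- Define T(n) = a(n+1)^2*a(n)^2 - (2*c1+c2+1)*a(n+1)*a(n) + c1*a(n+1) + c1*a(n) + c2, where a(n) is the sequence with a(1)=a(2)=1 and a(n+2) = (c1*a(n+1)+c2)/(a(n+1)^2*a(n)). Then T(n) = 0 for all n ≥ 1. -/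
/-!
For fixed `y ≠ 0`, `T(y, z) = 0` is a quadratic equation in `z` whose roots have product
`(c1 y + c2) / y²`, and `T` is symmetric. So if `T(a n, a (n+1)) = 0`, then `a n` is one root of
`T(a (n+1), ·) = 0` and, by Vieta, the recurrence produces exactly the other root `a (n+2)`.
-/

section Invariant

variable {K : Type*} [Field K] (c1 c2 : K)

def qrtInvariant (x y : K) : K :=
  y ^ 2 * x ^ 2 - (2 * c1 + c2 + 1) * y * x + c1 * y + c1 * x + c2

theorem qrtInvariant_next_eq_zero {x y : K} (hx : x ≠ 0) (hy : y ≠ 0)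
    (h : qrtInvariant c1 c2 x y = 0) :
    qrtInvariant c1 c2 y ((c1 * y + c2) / (y ^ 2 * x)) = 0 := by
  set z := (c1 * y + c2) / (y ^ 2 * x)
  have hz : z * (y ^ 2 * x) = c1 * y + c2 := div_mul_cancel₀ _ (by positivity)
  have key : y ^ 2 * x ^ 2 * qrtInvariant c1 c2 y z = 0 := by
    unfold qrtInvariant at h ⊢
    linear_combination (c1 * y + c2) * h
      + (z * y ^ 2 * x + c1 * y + c2 - (2 * c1 + c2 + 1) * x * y + c1 * x) * hz
  exact (mul_eq_zero.mp key).resolve_left (by positivity)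

end Invariant

theorem stmt_2 {K : Type*} [Field K] (c1 c2 : K) (a : ℕ → K)
    (ha1 : a 1 = 1) (ha2 : a 2 = 1)
    (hne : ∀ n, 1 ≤ n → a n ≠ 0)
    (hrec : ∀ n, 1 ≤ n → a (n + 2) = (c1 * a (n + 1) + c2) / (a (n + 1) ^ 2 * a n)) :
    ∀ n, 1 ≤ n →
      a (n + 1) ^ 2 * a n ^ 2 - (2 * c1 + c2 + 1) * a (n + 1) * a n
        + c1 * a (n + 1) + c1 * a n + c2 = 0 := by
  intro n hn
  change qrtInvariant c1 c2 (a n) (a (n + 1)) = 0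
  induction n, hn using Nat.le_induction with
  | base => simp only [qrtInvariant, ha1, ha2]; ring
  | succ n hn ih =>
    rw [show n + 1 + 1 = n + 2 from rfl, hrec n hn]
    exact qrtInvariant_next_eq_zero c1 c2 (hne n hn) (hne (n + 1) (by omega)) ih
end

section
/- Let q = c1 + c2 with q ≠ 0 in a field, and define s(n) by s(1)=s(2)=s(3)=1 and s(n) = q^{f(n)} for n ≥ 4 where f(n) = floor((n-3)^2/4). Then s satisfies the order-3 degree-2 recurrence s(n+3)^2*s(n)^2 + c1*s(n+2)^3*s(n) + c2*s(n+2)^2*s(n+1)^2 - ((2*c1+c2+1)*s(n+2)*s(n+1)*s(n) - c1*s(n+1)^3)*s(n+3) = 0 for all n ≥ 1. -/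
/-!
Write `q = c₁ + c₂`. The recurrence is homogeneous of degree 4, and on a quadruple whose
successive ratios are `r, r t, r t²` (or `p, p, p t`) it factors as a monomial times
`(t - 1) (t - q)`. Since `⌊(2m)² / 4⌋ = m²` and `⌊(2m + 1)² / 4⌋ = m² + m`, the ratios of `s`
are powers of `q` of exactly this shape with `t = q`, depending on the parity of `n`; the first
quadruple `1, 1, 1, 1` is the case `t = 1`.
-/

def somosQuadratic {R : Type*} [CommRing R] (c₁ c₂ a b c d : R) : R :=
  d ^ 2 * a ^ 2 + c₁ * c ^ 3 * a + c₂ * c ^ 2 * b ^ 2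
    - ((2 * c₁ + c₂ + 1) * c * b * a - c₁ * b ^ 3) * d

section somosQuadratic

variable {R : Type*} [CommRing R] (c₁ c₂ : R)

theorem somosQuadratic_mul_pow_ratios (A r t : R) :
    somosQuadratic c₁ c₂ A (A * r) (A * r ^ 2 * t) (A * r ^ 3 * t ^ 2)
      = A ^ 4 * r ^ 6 * t ^ 2 * (t - 1) * (t - (c₁ + c₂)) := by
  unfold somosQuadratic; ring

theorem somosQuadratic_geom_mul_last (A p t : R) :
    somosQuadratic c₁ c₂ A (A * p) (A * p ^ 2) (A * p ^ 3 * t)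
      = A ^ 4 * p ^ 6 * (t - 1) * (t - (c₁ + c₂)) := by
  unfold somosQuadratic; ring

end somosQuadratic

theorem Nat.two_mul_sq_div_four (m : ℕ) : (2 * m) ^ 2 / 4 = m ^ 2 := by
  rw [show (2 * m) ^ 2 = 4 * m ^ 2 by ring]; omega

theorem Nat.two_mul_add_one_sq_div_four (m : ℕ) : (2 * m + 1) ^ 2 / 4 = m ^ 2 + m := by
  rw [show (2 * m + 1) ^ 2 = 1 + 4 * (m ^ 2 + m) by ring]; omega

section sequence

variable {M : Type*} [Monoid M] {q : M} {s : ℕ → M}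
  (hs : ∀ n, 4 ≤ n → s n = q ^ ((n - 3) ^ 2 / 4))
include hs

theorem apply_two_mul_add_three (hs3 : s 3 = 1) (m : ℕ) : s (2 * m + 3) = q ^ (m ^ 2) := by
  rcases m.eq_zero_or_pos with rfl | hm
  · simpa using hs3
  · rw [hs _ (by omega), Nat.add_sub_cancel, Nat.two_mul_sq_div_four]

theorem apply_two_mul_add_four (m : ℕ) : s (2 * m + 4) = q ^ (m ^ 2 + m) := by
  rw [hs _ (by omega), show 2 * m + 4 - 3 = 2 * m + 1 by omega, Nat.two_mul_add_one_sq_div_four]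

end sequence

theorem stmt_12_general {K : Type*} [Field K] (c1 c2 : K) (s : ℕ → K)
    (hs1 : s 1 = 1) (hs2 : s 2 = 1) (hs3 : s 3 = 1)
    (hs : ∀ n, 4 ≤ n → s n = (c1 + c2) ^ ((n - 3) ^ 2 / 4)) :
    ∀ n, 1 ≤ n →
      s (n + 3) ^ 2 * s n ^ 2 + c1 * s (n + 2) ^ 3 * s n + c2 * s (n + 2) ^ 2 * s (n + 1) ^ 2
        - ((2 * c1 + c2 + 1) * s (n + 2) * s (n + 1) * s n - c1 * s (n + 1) ^ 3) * s (n + 3)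
        = 0 := by
  intro n hn
  show somosQuadratic c1 c2 (s n) (s (n + 1)) (s (n + 2)) (s (n + 3)) = 0
  have hodd := apply_two_mul_add_three hs hs3
  have heven := apply_two_mul_add_four hs
  obtain ⟨m, rfl | rfl | rfl | rfl⟩ : ∃ m, n = 1 ∨ n = 2 ∨ n = 2 * m + 3 ∨ n = 2 * m + 4 := by
    rcases Nat.even_or_odd' n with ⟨m, rfl | rfl⟩
    exacts [⟨m - 2, by omega⟩, ⟨m - 1, by omega⟩]
  · simpa [hs1, hs2, hs3, heven 0] using somosQuadratic_mul_pow_ratios c1 c2 1 1 1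
  · simpa [hs2, hs3, heven 0, hodd 1] using somosQuadratic_geom_mul_last c1 c2 1 1 (c1 + c2)
  · rw [show 2 * m + 3 + 1 = 2 * m + 4 by ring, show 2 * m + 3 + 2 = 2 * (m + 1) + 3 by ring,
      show 2 * m + 3 + 3 = 2 * (m + 1) + 4 by ring, hodd, hodd, heven, heven]
    have h := somosQuadratic_mul_pow_ratios c1 c2 ((c1 + c2) ^ m ^ 2) ((c1 + c2) ^ m) (c1 + c2)
    rw [sub_self, mul_zero] at h
    convert h using 2 <;> ring
  · rw [show 2 * m + 4 + 1 = 2 * (m + 1) + 3 by ring, show 2 * m + 4 + 2 = 2 * (m + 1) + 4 by ring,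
      show 2 * m + 4 + 3 = 2 * (m + 2) + 3 by ring, hodd, hodd, heven, heven]
    have h := somosQuadratic_geom_mul_last c1 c2 ((c1 + c2) ^ (m ^ 2 + m)) ((c1 + c2) ^ (m + 1))
      (c1 + c2)
    rw [sub_self, mul_zero] at h
    convert h using 2 <;> ring

theorem stmt_12 {K : Type*} [Field K] (c1 c2 : K) (hq : c1 + c2 ≠ 0) (s : ℕ → K)
    (hs1 : s 1 = 1) (hs2 : s 2 = 1) (hs3 : s 3 = 1)
    (hs : ∀ n, 4 ≤ n → s n = (c1 + c2) ^ ((n - 3) ^ 2 / 4)) :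
    ∀ n, 1 ≤ n →
      s (n + 3) ^ 2 * s n ^ 2 + c1 * s (n + 2) ^ 3 * s n + c2 * s (n + 2) ^ 2 * s (n + 1) ^ 2
        - ((2 * c1 + c2 + 1) * s (n + 2) * s (n + 1) * s n - c1 * s (n + 1) ^ 3) * s (n + 3)
        = 0 :=
  stmt_12_general c1 c2 s hs1 hs2 hs3 hs
end

section
/- Let s(n) be the generalized Somos-4 sequence: s(1)=...=s(4)=1 and s(n)*s(n-4) = c1*s(n-1)*s(n-3) + c2*s(n-2)^2, with all terms nonzero. Then s satisfies the order-3 quadratic relation s(n+3)^2*s(n)^2 + c1*s(n+2)^3*s(n) + c2*s(n+2)^2*s(n+1)^2 - ((2*c1+c2+1)*s(n+2)*s(n+1)*s(n) - c1*s(n+1)^3)*s(n+3) = 0 for all n ≥ 1. -/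
/-!
Dividing the relation by `s n * s (n+1) * s (n+2) * s (n+3)` turns it into `J = 2 c1 + c2 + 1`, where
`J(a, b, c, d) = a d / (b c) + c1 (c² / (b d) + b² / (a c)) + c2 b c / (a d)` is the classical conserved
quantity of Somos-4. So `J` is constant along the sequence, and its value on the initial terms
`1, 1, 1, 1` is `2 c1 + c2 + 1`.
-/

/-- `a b c d · (J(a, b, c, d) - k)`, the invariant `J` cleared of denominators. -/
def somos4Form {K : Type*} [Field K] (c1 c2 k a b c d : K) : K :=
  d ^ 2 * a ^ 2 + c1 * c ^ 3 * a + c2 * c ^ 2 * b ^ 2 - (k * c * b * a - c1 * b ^ 3) * d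

section

variable {K : Type*} [Field K] {c1 c2 k a b c d e : K}

theorem somos4Form_step (h : e * a = c1 * d * b + c2 * c ^ 2) :
    a * somos4Form c1 c2 k b c d e = e * somos4Form c1 c2 k a b c d := by
  unfold somos4Form
  linear_combination (e * b ^ 2 - a * d ^ 2) * h

theorem somos4Form_eq_zero_of_step (ha : a ≠ 0) (h : e * a = c1 * d * b + c2 * c ^ 2)
    (hF : somos4Form c1 c2 k a b c d = 0) : somos4Form c1 c2 k b c d e = 0 := by
  have := somos4Form_step (k := k) h
  rw [hF, mul_zero] at this
  exact (mul_eq_zero.mp this).resolve_left ha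

end

theorem stmt_13 {K : Type*} [Field K] (c1 c2 : K) (s : ℕ → K)
    (hs1 : s 1 = 1) (hs2 : s 2 = 1) (hs3 : s 3 = 1) (hs4 : s 4 = 1)
    (hsrec : ∀ n, 5 ≤ n → s n * s (n - 4) = c1 * s (n - 1) * s (n - 3) + c2 * s (n - 2) ^ 2)
    (hsne : ∀ n, 1 ≤ n → s n ≠ 0) :
    ∀ n, 1 ≤ n →
      s (n + 3) ^ 2 * s n ^ 2 + c1 * s (n + 2) ^ 3 * s n + c2 * s (n + 2) ^ 2 * s (n + 1) ^ 2
        - ((2 * c1 + c2 + 1) * s (n + 2) * s (n + 1) * s n - c1 * s (n + 1) ^ 3) * s (n + 3)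
        = 0 := by
  intro n hn
  change somos4Form c1 c2 (2 * c1 + c2 + 1) (s n) (s (n + 1)) (s (n + 2)) (s (n + 3)) = 0
  induction n, hn using Nat.le_induction with
  | base =>
    simp only [somos4Form, hs1, hs2, hs3, hs4]
    ring
  | succ n hn ih =>
    have hrec := hsrec (n + 4) (by omega)
    simp only [Nat.add_sub_cancel, show n + 4 - 1 = n + 3 by omega,
      show n + 4 - 3 = n + 1 by omega, show n + 4 - 2 = n + 2 by omega] at hrec
    exact somos4Form_eq_zero_of_step (hsne n hn) hrec ih
end

section
/- Over a field of characteristic 0, with q = c1 + c2 ≠ 0 and integers i ≥ 2, k ≥ 0: the quadratic equation X^2*q^{2k} - ((2*c1+c2+1)*q^{3k+3i-2} - c1*q^{3k+3i-3})*X + c1*q^{4k+6i-3} + c2*q^{4k+6i-4} = 0 has exactly the roots X = q^{k+3i-1} and X = q^{k+3i-3}*(c2 + c1*c2 + c1^2). -/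
theorem odd_step_quadratic_eq_mul {R : Type*} [CommRing R] (c1 c2 X : R) {i : ℕ} (k : ℕ)
    (hi : 2 ≤ i) :
    X ^ 2 * (c1 + c2) ^ (2 * k)
        - ((2 * c1 + c2 + 1) * (c1 + c2) ^ (3 * k + 3 * i - 2)
            - c1 * (c1 + c2) ^ (3 * k + 3 * i - 3)) * X
        + c1 * (c1 + c2) ^ (4 * k + 6 * i - 3) + c2 * (c1 + c2) ^ (4 * k + 6 * i - 4)
      = (c1 + c2) ^ (2 * k) * ((X - (c1 + c2) ^ (k + 3 * i - 1))
          * (X - (c1 + c2) ^ (k + 3 * i - 3) * (c2 + c1 * c2 + c1 ^ 2))) := by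
  obtain ⟨j, rfl⟩ := Nat.exists_eq_add_of_le' hi
  rw [show 3 * k + 3 * (j + 2) - 2 = 3 * k + 3 * j + 4 by omega,
    show 3 * k + 3 * (j + 2) - 3 = 3 * k + 3 * j + 3 by omega,
    show 4 * k + 6 * (j + 2) - 3 = 4 * k + 6 * j + 9 by omega,
    show 4 * k + 6 * (j + 2) - 4 = 4 * k + 6 * j + 8 by omega,
    show k + 3 * (j + 2) - 1 = k + 3 * j + 5 by omega,
    show k + 3 * (j + 2) - 3 = k + 3 * j + 3 by omega]
  ring

theorem stmt_15_general {K : Type*} [Field K] (c1 c2 : K) (hq : c1 + c2 ≠ 0)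
    (i k : ℕ) (hi : 2 ≤ i) :
    ∀ X : K,
      X ^ 2 * (c1 + c2) ^ (2 * k)
          - ((2 * c1 + c2 + 1) * (c1 + c2) ^ (3 * k + 3 * i - 2)
              - c1 * (c1 + c2) ^ (3 * k + 3 * i - 3)) * X
          + c1 * (c1 + c2) ^ (4 * k + 6 * i - 3) + c2 * (c1 + c2) ^ (4 * k + 6 * i - 4) = 0
        ↔ X = (c1 + c2) ^ (k + 3 * i - 1)
            ∨ X = (c1 + c2) ^ (k + 3 * i - 3) * (c2 + c1 * c2 + c1 ^ 2) := by
  intro X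
  rw [odd_step_quadratic_eq_mul c1 c2 X k hi, mul_eq_zero, or_iff_right (pow_ne_zero _ hq),
    mul_eq_zero, sub_eq_zero, sub_eq_zero]

theorem stmt_15 {K : Type*} [Field K] [CharZero K] (c1 c2 : K) (hq : c1 + c2 ≠ 0)
    (i k : ℕ) (hi : 2 ≤ i) :
    ∀ X : K,
      X ^ 2 * (c1 + c2) ^ (2 * k)
          - ((2 * c1 + c2 + 1) * (c1 + c2) ^ (3 * k + 3 * i - 2)
              - c1 * (c1 + c2) ^ (3 * k + 3 * i - 3)) * X
          + c1 * (c1 + c2) ^ (4 * k + 6 * i - 3) + c2 * (c1 + c2) ^ (4 * k + 6 * i - 4) = 0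
        ↔ X = (c1 + c2) ^ (k + 3 * i - 1)
            ∨ X = (c1 + c2) ^ (k + 3 * i - 3) * (c2 + c1 * c2 + c1 ^ 2) :=
  stmt_15_general c1 c2 hq i k hi
end
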